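/- arXiv:2501.14428 — 7 statements merged into one kernel-verified Lean document; each statement's English description precedes it below -/
import Mathlib

section
/- Let S be a finite set and X = (X_s)_{s∈S} be a {0,1}-valued process such that P(X(I) ≡ 0) > 0 for all nonempty I ⊆ S. Then there is a unique signed measure ν on the nonempty subsets of S satisfying ν({A : A ∩ I ≠ ∅}) = -log P(X(I) ≡ 0) for all I ⊆ S, and it is given by ν(K) = Σ_{I ⊆ K} (-1)^{|K|-|I|} log P(X(S∖I) ≡ 0) for nonempty K ⊆ S. -/
open MeasureTheory Finset

/-!
Write `Z ν J = ∑ K ⊆ J, ν K`. The nonempty sets not meeting `I` are the nonempty subsets of `Iᶜ`,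
so the defining condition says `Z ν J = Z ν univ + log P(X(Jᶜ) ≡ 0)` for every `J`. Möbius
inversion on the Boolean lattice, whose Möbius function is `(-1) ^ (#K - #I)`, recovers `ν` from
`Z ν`; on a nonempty `K` the constant `Z ν univ` drops out because alternating sums over a
nonempty powerset vanish. Conversely the Möbius transform of `J ↦ log P(X(Jᶜ) ≡ 0) - log P(X ≡ 0)`
vanishes at `∅` and solves the condition, since `P(X(∅) ≡ 0) = 1`.
-/

namespace Finset

variable {α R : Type*} [DecidableEq α] [CommRing R]

theorem sum_powerset_neg_one_pow_card' (s : Finset α) :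
    ∑ t ∈ s.powerset, (-1 : R) ^ #t = if s = ∅ then 1 else 0 := by
  simpa using congrArg (Int.cast : ℤ → R) (sum_powerset_neg_one_pow_card (x := s))

theorem sum_Icc_neg_one_pow_card_sub_card_left {J K : Finset α} (hJK : J ⊆ K) :
    ∑ I ∈ Icc J K, (-1 : R) ^ (#I - #J) = if J = K then 1 else 0 := by
  have hdisj {D} (hD : D ∈ (K \ J).powerset) : Disjoint J D :=
    disjoint_of_subset_right (mem_powerset.1 hD) disjoint_sdiff
  have hinj : Set.InjOn (J ∪ ·) (K \ J).powerset := fun D hD E hE hDE => by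
    simpa [union_sdiff_cancel_left (hdisj hD), union_sdiff_cancel_left (hdisj hE)] using
      congrArg (· \ J) hDE
  rw [Icc_eq_image_powerset hJK, sum_image hinj,
    sum_congr rfl fun D hD => by rw [card_union_of_disjoint (hdisj hD), Nat.add_sub_cancel_left],
    sum_powerset_neg_one_pow_card']
  refine if_congr ?_ rfl rfl
  rw [sdiff_eq_empty_iff_subset]
  exact ⟨hJK.antisymm, fun h => h ▸ subset_rfl⟩

theorem sum_Icc_neg_one_pow_card_sub_card_right {J K : Finset α} (hJK : J ⊆ K) :
    ∑ I ∈ Icc J K, (-1 : R) ^ (#K - #I) = if J = K then 1 else 0 := by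
  have hsign : ∀ I ∈ Icc J K, (-1 : R) ^ (#K - #I) = (-1) ^ (#K - #J) * (-1) ^ (#I - #J) := by
    intro I hI
    obtain ⟨hJI, hIK⟩ := mem_Icc.1 hI
    have := card_le_card hJI
    have := card_le_card hIK
    rw [← pow_add, show #K - #J + (#I - #J) = #K - #I + 2 * (#I - #J) by omega, pow_add, pow_mul]
    simp
  rw [sum_congr rfl hsign, ← mul_sum, sum_Icc_neg_one_pow_card_sub_card_left hJK]
  split_ifs with h <;> simp [h]

theorem sum_powerset_sum_powerset_comm {M : Type*} [AddCommMonoid M] (f : Finset α → Finset α → M)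
    (K : Finset α) :
    ∑ I ∈ K.powerset, ∑ J ∈ I.powerset, f I J = ∑ J ∈ K.powerset, ∑ I ∈ Icc J K, f I J :=
  sum_comm' fun I J => by
    simp only [mem_powerset, mem_Icc]
    exact ⟨fun ⟨hIK, hJI⟩ => ⟨⟨hJI, hIK⟩, hJI.trans hIK⟩, fun ⟨h, _⟩ => ⟨h.2, h.1⟩⟩

theorem sum_powerset_neg_one_pow_mul_sum_powerset (g : Finset α → R) (K : Finset α) :
    ∑ I ∈ K.powerset, (-1 : R) ^ (#K - #I) * ∑ J ∈ I.powerset, g J = g K := by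
  simp_rw [mul_sum]
  rw [sum_powerset_sum_powerset_comm]
  simp_rw [← sum_mul]
  rw [sum_congr rfl fun J hJ => by
    rw [sum_Icc_neg_one_pow_card_sub_card_right (mem_powerset.1 hJ)]]
  simp

theorem sum_powerset_sum_powerset_neg_one_pow_mul (g : Finset α → R) (J : Finset α) :
    ∑ K ∈ J.powerset, ∑ I ∈ K.powerset, (-1 : R) ^ (#K - #I) * g I = g J := by
  rw [sum_powerset_sum_powerset_comm]
  simp_rw [← sum_mul]
  rw [sum_congr rfl fun I hI => by
    rw [sum_Icc_neg_one_pow_card_sub_card_left (mem_powerset.1 hI)]]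
  simp

theorem sum_filter_inter_nonempty [Fintype α] {M : Type*} [AddCommGroup M] (ν : Finset α → M)
    (I : Finset α) :
    ∑ K ∈ univ.powerset.filter (fun K => (K ∩ I).Nonempty), ν K
      = ∑ K ∈ univ.powerset, ν K - ∑ K ∈ Iᶜ.powerset, ν K := by
  rw [eq_sub_iff_add_eq, ← sum_filter_add_sum_filter_not univ.powerset (fun K => (K ∩ I).Nonempty)]
  congr 2
  ext K
  simp [not_nonempty_iff_eq_empty, ← disjoint_iff_inter_eq_empty, subset_compl_iff_disjoint_right]

theorem eq_sum_powerset_neg_one_pow_mul_of_sum_powerset_eq {ν L : Finset α → R} {c : R}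
    (h : ∀ J, ∑ K ∈ J.powerset, ν K = c + L J) {K : Finset α} (hK : K.Nonempty) :
    ν K = ∑ I ∈ K.powerset, (-1 : R) ^ (#K - #I) * L I := by
  have hsign : ∑ I ∈ K.powerset, (-1 : R) ^ (#K - #I) = 0 := by
    have hIcc : Icc ∅ K = K.powerset := by ext; simp
    rw [← hIcc, sum_Icc_neg_one_pow_card_sub_card_right (empty_subset K),
      if_neg hK.ne_empty.symm]
  calc ν K = ∑ I ∈ K.powerset, (-1 : R) ^ (#K - #I) * ∑ J ∈ I.powerset, ν J :=
        (sum_powerset_neg_one_pow_mul_sum_powerset ν K).symm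
    _ = c * ∑ I ∈ K.powerset, (-1 : R) ^ (#K - #I)
          + ∑ I ∈ K.powerset, (-1 : R) ^ (#K - #I) * L I := by
        simp_rw [h, mul_add, sum_add_distrib, mul_sum, mul_comm c]
    _ = ∑ I ∈ K.powerset, (-1 : R) ^ (#K - #I) * L I := by rw [hsign, mul_zero, zero_add]

end Finset

theorem stmt0_general {S : Type*} [Fintype S] [DecidableEq S]
    (μ : Measure (S → Bool)) [IsProbabilityMeasure μ]
    (P0 : Finset S → ℝ)
    (hP0 : ∀ I : Finset S, P0 I = (μ {f | ∀ i ∈ I, f i = false}).toReal) :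
    (∃! ν : Finset S → ℝ, ν ∅ = 0 ∧
      ∀ I : Finset S,
        ∑ K ∈ Finset.univ.powerset.filter (fun K => (K ∩ I).Nonempty), ν K
          = - Real.log (P0 I)) ∧
    (∀ ν : Finset S → ℝ,
      (ν ∅ = 0 ∧ ∀ I : Finset S,
        ∑ K ∈ Finset.univ.powerset.filter (fun K => (K ∩ I).Nonempty), ν K
          = - Real.log (P0 I)) →
      ∀ K : Finset S, K.Nonempty →
        ν K = ∑ I ∈ K.powerset, (-1 : ℝ) ^ (K.card - I.card) * Real.log (P0 Iᶜ)) := by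
  have hP0_empty : P0 ∅ = 1 := by simp [hP0]
  set L : Finset S → ℝ := fun I => Real.log (P0 Iᶜ)
  have formula : ∀ ν : Finset S → ℝ,
      (ν ∅ = 0 ∧ ∀ I : Finset S,
        ∑ K ∈ Finset.univ.powerset.filter (fun K => (K ∩ I).Nonempty), ν K
          = - Real.log (P0 I)) →
      ∀ K : Finset S, K.Nonempty → ν K = ∑ I ∈ K.powerset, (-1 : ℝ) ^ (#K - #I) * L I := by
    rintro ν ⟨-, hν⟩ K hK
    refine eq_sum_powerset_neg_one_pow_mul_of_sum_powerset_eq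
      (c := ∑ K ∈ univ.powerset, ν K) (fun J => ?_) hK
    have hJ := hν Jᶜ
    rw [sum_filter_inter_nonempty, compl_compl] at hJ
    linarith
  set ν₀ : Finset S → ℝ := fun K => ∑ I ∈ K.powerset, (-1 : ℝ) ^ (#K - #I) * (L I - L ∅)
  have hν₀ : ν₀ ∅ = 0 ∧ ∀ I : Finset S,
      ∑ K ∈ Finset.univ.powerset.filter (fun K => (K ∩ I).Nonempty), ν₀ K
        = - Real.log (P0 I) := by
    refine ⟨by simp [ν₀], fun I => ?_⟩
    rw [sum_filter_inter_nonempty, sum_powerset_sum_powerset_neg_one_pow_mul,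
      sum_powerset_sum_powerset_neg_one_pow_mul]
    simp only [L, compl_univ, compl_compl, hP0_empty, Real.log_one]
    ring
  refine ⟨⟨ν₀, hν₀, fun ν hν => funext fun K => ?_⟩, formula⟩
  rcases K.eq_empty_or_nonempty with rfl | hK
  · rw [hν.1, hν₀.1]
  · rw [formula ν hν K hK, formula ν₀ hν₀ K hK]

/-- Möbius inversion: existence and uniqueness of the signed measure
corresponding to a `{0,1}`-valued process on a finite set, together with the
explicit formula. -/
theorem stmt0 {S : Type*} [Fintype S] [DecidableEq S]
    (μ : Measure (S → Bool)) [IsProbabilityMeasure μ]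
    (P0 : Finset S → ℝ)
    (hP0 : ∀ I : Finset S, P0 I = (μ {f | ∀ i ∈ I, f i = false}).toReal)
    (hpos : ∀ I : Finset S, I.Nonempty → 0 < P0 I) :
    (∃! ν : Finset S → ℝ, ν ∅ = 0 ∧
      ∀ I : Finset S,
        ∑ K ∈ Finset.univ.powerset.filter (fun K => (K ∩ I).Nonempty), ν K
          = - Real.log (P0 I)) ∧
    (∀ ν : Finset S → ℝ,
      (ν ∅ = 0 ∧ ∀ I : Finset S,
        ∑ K ∈ Finset.univ.powerset.filter (fun K => (K ∩ I).Nonempty), ν K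
          = - Real.log (P0 I)) →
      ∀ K : Finset S, K.Nonempty →
        ν K = ∑ I ∈ K.powerset, (-1 : ℝ) ^ (K.card - I.card) * Real.log (P0 Iᶜ)) :=
  stmt0_general μ P0 hP0
end

section
/- Let S be a finite set, X a {0,1}-valued process on S with P(X(I) ≡ 0) > 0 for all nonempty I ⊆ S, and ν the unique signed measure corresponding to X via Möbius inversion. Let B ⊆ S, and define ν_B on subsets of B by ν_B(𝒜) = ν({A' ⊆ S : A' ∩ B ∈ 𝒜}). Then ν_B is the unique signed measure corresponding to the restricted process X|_B. -/
open MeasureTheory Finset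
open scoped Classical

/-- Since `I ⊆ B`, a set meets `I` iff its trace on `B` does, so summing the fibres of
`A ↦ A ∩ B` over the traces that meet `I` regroups the sum over the sets that meet `I`. -/
theorem Finset.sum_fiberwise_inter_filter_inter_nonempty {S M : Type*} [DecidableEq S]
    [AddCommMonoid M] (ν : Finset S → M) (T : Finset S) {B I : Finset S} (hI : I ⊆ B) :
    ∑ K ∈ B.powerset.filter (fun K => (K ∩ I).Nonempty),
        ∑ A ∈ T.powerset.filter (fun A => A ∩ B = K), ν A
      = ∑ A ∈ T.powerset.filter (fun A => (A ∩ I).Nonempty), ν A := by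
  rw [sum_fiberwise_eq_sum_filter]
  refine sum_congr (filter_congr fun A _ => ?_) fun _ _ => rfl
  rw [mem_filter, mem_powerset, inter_assoc, inter_eq_right.mpr hI]
  exact and_iff_right inter_subset_right

theorem stmt1_general {S : Type*} [Fintype S] [DecidableEq S]
    (P0 : Finset S → ℝ)
    (ν : Finset S → ℝ)
    (hν : ∀ I : Finset S,
      ∑ K ∈ Finset.univ.powerset.filter (fun K => (K ∩ I).Nonempty), ν K
        = - Real.log (P0 I))
    (B : Finset S) (νB : Finset S → ℝ)
    (hνB : ∀ K : Finset S,
      νB K = ∑ A ∈ Finset.univ.powerset.filter (fun A => A ∩ B = K), ν A) :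
    ∀ I : Finset S, I ⊆ B →
      ∑ K ∈ B.powerset.filter (fun K => (K ∩ I).Nonempty), νB K
        = - Real.log (P0 I) := by
  intro I hI
  simp only [hνB]
  rw [sum_fiberwise_inter_filter_inter_nonempty ν univ hI, hν I]

/-- the projection `ν_B(𝒜) = ν({A' : A' ∩ B ∈ 𝒜})` of the unique signed
measure corresponding to `X` is the unique signed measure corresponding to the
restricted process `X|_B`, i.e. it satisfies the defining (characterizing) identity
for the void probabilities of `X|_B`. -/
theorem stmt1 {S : Type*} [Fintype S] [DecidableEq S]
    (μ : Measure (S → Bool)) [IsProbabilityMeasure μ]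
    (P0 : Finset S → ℝ)
    (hP0 : ∀ I : Finset S, P0 I = (μ {f | ∀ i ∈ I, f i = false}).toReal)
    (hpos : ∀ I : Finset S, I.Nonempty → 0 < P0 I)
    (ν : Finset S → ℝ) (hν0 : ν ∅ = 0)
    (hν : ∀ I : Finset S,
      ∑ K ∈ Finset.univ.powerset.filter (fun K => (K ∩ I).Nonempty), ν K
        = - Real.log (P0 I))
    (B : Finset S) (νB : Finset S → ℝ)
    (hνB : ∀ K : Finset S,
      νB K = ∑ A ∈ Finset.univ.powerset.filter (fun A => A ∩ B = K), ν A) :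
    ∀ I : Finset S, I ⊆ B →
      ∑ K ∈ B.powerset.filter (fun K => (K ∩ I).Nonempty), νB K
        = - Real.log (P0 I) :=
  stmt1_general P0 ν hν B νB hνB
end

section
/- Let S be a finite set, X a {0,1}-valued process on S with P(X(I) ≡ 0) > 0 for all nonempty I, and ν the corresponding unique signed measure. Let B ⊆ S. Then the restriction of ν to the nonempty subsets of B is the unique signed measure corresponding to the conditioned process X given the event {X(B^c) ≡ 0}. -/
open MeasureTheory Finset
open scoped Classical

/-!
Conditioning on `{X(Bᶜ) ≡ 0}` turns the void probability of `I ⊆ B` into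
`P(X(I ∪ Bᶜ) ≡ 0) / P(X(Bᶜ) ≡ 0)`, whose negative logarithm is `ν(hits I ∪ Bᶜ) - ν(hits Bᶜ)`.
A set hits `I ∪ Bᶜ` but not `Bᶜ` exactly when it lies inside `B` and hits `I`, so this difference
is the restriction of `ν` to subsets of `B`, evaluated on the sets hitting `I`.
-/

section Hitting

variable {S : Type*} [Fintype S] [DecidableEq S]

theorem filter_powerset_inter_nonempty_eq_sdiff (B I : Finset S) :
    B.powerset.filter (fun K => (K ∩ I).Nonempty) =
      univ.powerset.filter (fun K => (K ∩ (I ∪ Bᶜ)).Nonempty) \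
        univ.powerset.filter (fun K => (K ∩ Bᶜ).Nonempty) := by
  ext K
  simp only [mem_sdiff, mem_filter, mem_powerset, subset_univ, true_and, Finset.Nonempty,
    mem_inter, mem_union, mem_compl, not_exists, not_and, not_not]
  rw [subset_iff]
  tauto

theorem sum_filter_powerset_inter_nonempty_eq_sub {M : Type*} [AddCommGroup M]
    (ν : Finset S → M) (B I : Finset S) :
    ∑ K ∈ B.powerset.filter (fun K => (K ∩ I).Nonempty), ν K =
      ∑ K ∈ univ.powerset.filter (fun K => (K ∩ (I ∪ Bᶜ)).Nonempty), ν K -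
        ∑ K ∈ univ.powerset.filter (fun K => (K ∩ Bᶜ).Nonempty), ν K := by
  have hmono : univ.powerset.filter (fun K => (K ∩ Bᶜ).Nonempty) ⊆
      univ.powerset.filter (fun K => (K ∩ (I ∪ Bᶜ)).Nonempty) :=
    monotone_filter_right _ fun K _ h => h.mono (inter_subset_inter_left subset_union_right)
  rw [filter_powerset_inter_nonempty_eq_sdiff, sum_sdiff_eq_sub hmono]

end Hitting

theorem stmt2_general {S : Type*} [Fintype S] [DecidableEq S]
    (μ : Measure (S → Bool)) [IsProbabilityMeasure μ]
    (P0 : Finset S → ℝ)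
    (hP0 : ∀ I : Finset S, P0 I = (μ {f | ∀ i ∈ I, f i = false}).toReal)
    (hpos : ∀ I : Finset S, I.Nonempty → 0 < P0 I)
    (ν : Finset S → ℝ)
    (hν : ∀ I : Finset S,
      ∑ K ∈ Finset.univ.powerset.filter (fun K => (K ∩ I).Nonempty), ν K
        = - Real.log (P0 I))
    (B : Finset S) :
    ∀ I : Finset S, I ⊆ B →
      ∑ K ∈ B.powerset.filter (fun K => (K ∩ I).Nonempty), ν K
        = - Real.log (P0 (I ∪ Bᶜ) / P0 Bᶜ) := by
  intro I _
  have hP0_pos (J : Finset S) : 0 < P0 J := by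
    rcases J.eq_empty_or_nonempty with rfl | hJ
    · simp [hP0]
    · exact hpos J hJ
  rw [sum_filter_powerset_inter_nonempty_eq_sub, hν, hν,
    Real.log_div (hP0_pos _).ne' (hP0_pos _).ne']
  ring

/-- the restriction of the unique signed measure `ν` of `X` to the
(nonempty) subsets of `B` is the unique signed measure corresponding to the
conditioned process `X | {X(Bᶜ) ≡ 0}`: it satisfies the defining void-probability
identity of that conditioned process. -/
theorem stmt2 {S : Type*} [Fintype S] [DecidableEq S]
    (μ : Measure (S → Bool)) [IsProbabilityMeasure μ]
    (P0 : Finset S → ℝ)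
    (hP0 : ∀ I : Finset S, P0 I = (μ {f | ∀ i ∈ I, f i = false}).toReal)
    (hpos : ∀ I : Finset S, I.Nonempty → 0 < P0 I)
    (ν : Finset S → ℝ) (hν0 : ν ∅ = 0)
    (hν : ∀ I : Finset S,
      ∑ K ∈ Finset.univ.powerset.filter (fun K => (K ∩ I).Nonempty), ν K
        = - Real.log (P0 I))
    (B : Finset S) :
    ∀ I : Finset S, I ⊆ B →
      ∑ K ∈ B.powerset.filter (fun K => (K ∩ I).Nonempty), ν K
        = - Real.log (P0 (I ∪ Bᶜ) / P0 Bᶜ) :=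
  stmt2_general μ P0 hP0 hpos ν hν B
end

section
/- Let G be a finite connected graph and X a {0,1}-valued process on V(G) satisfying the Markov property, with P(X(A) ≡ 0 | X(∂A) ≡ 0) > 0 for all A ⊆ V(G). Let ν be the unique signed measure corresponding to X. Then for every subset D of V(G) that induces a disconnected subgraph, ν(D) = 0. -/
/-!
Split a disconnected `D` as `A ⊔ B` with no edge between `A` and `B`. For `I ⊆ A` and `J ⊆ B`
the set `J` lies outside `I ∪ ∂I`; summing the Markov identity over the configurations that vanish
on `I ∪ ∂I` and outside `J`, and comparing with `J = ∅`, gives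
`P(X ≡ 0 off I ∪ J) · P(X ≡ 0) = P(X ≡ 0 off I) · P(X ≡ 0 off J)`.
So on subsets `K` of `D`, `log P(X ≡ 0 off K)` is a function of `K ∩ A` plus a function of `K ∩ B`
minus a constant, and the alternating sum over the subsets of `D` kills each of these three terms,
because each ignores some point of `D`.
-/

open MeasureTheory Finset

theorem sum_powerset_neg_one_pow_mul_eq_zero {α R : Type*} [DecidableEq α] [CommRing R]
    {D : Finset α} {b : α} (hb : b ∈ D) {h : Finset α → R}
    (hh : ∀ K ⊆ D.erase b, h (insert b K) = h K) :
    ∑ K ∈ D.powerset, (-1 : R) ^ (#D - #K) * h K = 0 := by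
  rw [← insert_erase hb, sum_powerset_insert (notMem_erase b D), ← sum_add_distrib]
  refine sum_eq_zero fun K hK => ?_
  have hKD : K ⊆ D.erase b := mem_powerset.1 hK
  have hcard : #K ≤ #(D.erase b) := card_le_card hKD
  rw [card_insert_of_notMem (notMem_erase b D),
    card_insert_of_notMem (notMem_mono hKD (notMem_erase b D)), hh K hKD,
    Nat.add_sub_add_right, Nat.sub_add_comm hcard, pow_succ]
  ring

section Graph

variable {V : Type*} [DecidableEq V] (G : SimpleGraph V)

section Boundary

open scoped Classical

variable [Fintype V]

noncomputable def exteriorBoundary (A : Finset V) : Finset V :=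
  univ.filter (fun v => v ∉ A ∧ ∃ u ∈ A, G.Adj u v)

theorem disjoint_exteriorBoundary (A : Finset V) : Disjoint A (exteriorBoundary G A) :=
  disjoint_left.2 fun _ hvA hvE => (mem_filter.1 hvE).2.1 hvA

theorem exteriorBoundary_univ : exteriorBoundary G univ = ∅ :=
  filter_false_of_mem fun v _ hv => hv.1 (mem_univ v)

theorem disjoint_union_exteriorBoundary {A J : Finset V} (hAJ : Disjoint A J)
    (hadj : ∀ u ∈ A, ∀ w ∈ J, ¬ G.Adj u w) : Disjoint J (A ∪ exteriorBoundary G A) := by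
  rw [disjoint_union_right]
  refine ⟨hAJ.symm, disjoint_left.2 fun w hwJ hwE => ?_⟩
  obtain ⟨-, u, huA, hadj'⟩ := (mem_filter.1 hwE).2
  exact hadj u huA w hwJ hadj'

end Boundary

theorem exists_split_of_not_connected_induce {D : Finset V} (hD : D.Nonempty)
    (hconn : ¬ (G.induce (D : Set V)).Connected) :
    ∃ A ⊆ D, A.Nonempty ∧ (D \ A).Nonempty ∧ ∀ u ∈ A, ∀ w ∈ D \ A, ¬ G.Adj u w := by
  classical
  have : Nonempty (D : Set V) := hD.coe_sort
  obtain ⟨x, y, hxy⟩ : ∃ x y : (D : Set V), ¬ (G.induce (D : Set V)).Reachable x y := by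
    by_contra! h
    exact hconn ⟨h⟩
  let A : Finset V := D.filter fun v => ∃ hv : v ∈ D, (G.induce (D : Set V)).Reachable x ⟨v, hv⟩
  refine ⟨A, filter_subset _ _, ⟨x, mem_filter.2 ⟨x.2, x.2, .rfl⟩⟩,
    ⟨y, mem_sdiff.2 ⟨y.2, fun hy => hxy (mem_filter.1 hy).2.2⟩⟩, ?_⟩
  intro u hu w hw hadj
  obtain ⟨hwD, hwA⟩ := mem_sdiff.1 hw
  obtain ⟨-, huD, hxu⟩ := mem_filter.1 hu
  have hadj' : (G.induce (D : Set V)).Adj ⟨u, huD⟩ ⟨w, hwD⟩ := hadj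
  exact hwA (mem_filter.2 ⟨hwD, hwD, hxu.trans hadj'.reachable⟩)

end Graph

section Field

variable {V : Type*}

def agreeOn (S : Finset V) (f : V → Bool) : Set (V → Bool) := {g | ∀ v ∈ S, g v = f v}

def zeroOn (S : Finset V) : Set (V → Bool) := {g | ∀ v ∈ S, g v = false}

theorem agreeOn_eq_zeroOn {S : Finset V} {f : V → Bool} (hf : ∀ v ∈ S, f v = false) :
    agreeOn S f = zeroOn S :=
  Set.ext fun _ => forall₂_congr fun v hv => by rw [hf v hv]

theorem zeroOn_union [DecidableEq V] (S T : Finset V) :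
    zeroOn (S ∪ T) = zeroOn S ∩ zeroOn T := by
  ext g
  simp only [zeroOn, Set.mem_ofPred_eq, Set.mem_inter_iff, mem_union, or_imp, forall_and]

theorem zeroOn_anti {S T : Finset V} (h : S ⊆ T) : zeroOn T ⊆ zeroOn S :=
  fun _ hg v hv => hg v (h hv)

variable [Fintype V]

theorem measure_zeroOn_ne_zero {μ : Measure (V → Bool)} (h0 : μ (zeroOn univ) ≠ 0)
    (S : Finset V) : μ (zeroOn S) ≠ 0 :=
  fun h => h0 (measure_mono_null (zeroOn_anti (subset_univ S)) h)

variable [DecidableEq V]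

theorem sum_measure_inter_agreeOn_decide (μ : Measure (V → Bool)) (W : Set (V → Bool))
    {R J : Finset V} (hJ : J ⊆ R) :
    ∑ T ∈ J.powerset, μ (W ∩ agreeOn R fun v => decide (v ∈ T)) = μ (W ∩ zeroOn (R \ J)) := by
  have hunion :
      W ∩ zeroOn (R \ J) = ⋃ T ∈ J.powerset, W ∩ agreeOn R fun v => decide (v ∈ T) := by
    ext g
    simp only [Set.mem_iUnion, Set.mem_inter_iff, exists_prop, mem_powerset]
    constructor
    · rintro ⟨hgW, hg⟩
      refine ⟨J.filter (g · = true), filter_subset _ _, hgW, fun v hv => ?_⟩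
      by_cases hvJ : v ∈ J
      · simp [hvJ]
      · simpa [hvJ] using hg v (mem_sdiff.2 ⟨hv, hvJ⟩)
    · rintro ⟨T, hTJ, hgW, hg⟩
      refine ⟨hgW, fun v hv => ?_⟩
      obtain ⟨hvR, hvJ⟩ := mem_sdiff.1 hv
      have hvT : v ∉ T := fun h => hvJ (hTJ h)
      simpa [hvT] using hg v hvR
  have hdisj : (J.powerset : Set (Finset V)).PairwiseDisjoint
      fun T => W ∩ agreeOn R fun v => decide (v ∈ T) := by
    intro T hT T' hT' hne
    refine Set.disjoint_left.2 fun g hg hg' => hne (ext fun v => ?_)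
    by_cases hvR : v ∈ R
    · simpa using (hg.2 v hvR).symm.trans (hg'.2 v hvR)
    · exact iff_of_false (fun h => hvR (hJ (mem_powerset.1 hT h)))
        (fun h => hvR (hJ (mem_powerset.1 hT' h)))
  rw [hunion, measure_biUnion_finset hdisj
    fun _ _ => DiscreteMeasurableSpace.forall_measurableSet _]

def IsMarkovField (μ : Measure (V → Bool)) (extB : Finset V → Finset V) : Prop :=
  ∀ (A : Finset V) (f : V → Bool),
    μ (agreeOn A f ∩ agreeOn (extB A) f ∩ agreeOn (A ∪ extB A)ᶜ f) * μ (agreeOn (extB A) f)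
      = μ (agreeOn A f ∩ agreeOn (extB A) f) * μ (agreeOn (extB A) f ∩ agreeOn (A ∪ extB A)ᶜ f)

noncomputable def logVoid (μ : Measure (V → Bool)) (K : Finset V) : ℝ :=
  Real.log (μ (zeroOn Kᶜ)).toReal

namespace IsMarkovField

variable {μ : Measure (V → Bool)} {extB : Finset V → Finset V}

theorem measure_zeroOn_mul (hM : IsMarkovField μ extB) {I J : Finset V}
    (hJ : J ⊆ (I ∪ extB I)ᶜ) :
    μ (zeroOn I ∩ zeroOn (extB I) ∩ zeroOn ((I ∪ extB I)ᶜ \ J)) * μ (zeroOn (extB I))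
      = μ (zeroOn I ∩ zeroOn (extB I)) * μ (zeroOn (extB I) ∩ zeroOn ((I ∪ extB I)ᶜ \ J)) := by
  rw [← sum_measure_inter_agreeOn_decide μ _ hJ, ← sum_measure_inter_agreeOn_decide μ _ hJ,
    sum_mul, mul_sum]
  refine sum_congr rfl fun T hT => ?_
  have hT : ∀ v ∈ I ∪ extB I, decide (v ∈ T) = false := fun v hv =>
    decide_eq_false fun hvT => mem_compl.1 (hJ (mem_powerset.1 hT hvT)) hv
  have hI := agreeOn_eq_zeroOn fun v hv => hT v (mem_union_left _ hv)
  have hE := agreeOn_eq_zeroOn fun v hv => hT v (mem_union_right I hv)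
  simpa only [hI, hE] using hM I fun v => decide (v ∈ T)

theorem measure_zeroOn_compl_union_mul [IsFiniteMeasure μ] (hM : IsMarkovField μ extB)
    {I J : Finset V} (hI : Disjoint I (extB I)) (hJ : Disjoint J (I ∪ extB I))
    (he : μ (zeroOn (extB I)) ≠ 0) :
    μ (zeroOn (I ∪ J)ᶜ) * μ (zeroOn univ) = μ (zeroOn Iᶜ) * μ (zeroOn Jᶜ) := by
  set E := extB I
  have key : ∀ J, Disjoint J (I ∪ E) →
      μ (zeroOn Jᶜ) * μ (zeroOn E) = μ (zeroOn I ∩ zeroOn E) * μ (zeroOn (I ∪ J)ᶜ) := by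
    intro J hJ
    have h1 : Jᶜ = I ∪ E ∪ ((I ∪ E)ᶜ \ J) := by
      ext v
      have hvJ : v ∈ J → v ∉ I ∪ E := fun h => disjoint_left.1 hJ h
      simp only [mem_union, mem_compl, mem_sdiff] at hvJ ⊢
      tauto
    have h2 : (I ∪ J)ᶜ = E ∪ ((I ∪ E)ᶜ \ J) := by
      ext v
      have hvJ : v ∈ J → v ∉ I ∪ E := fun h => disjoint_left.1 hJ h
      have hvI : v ∈ I → v ∉ E := fun h => disjoint_left.1 hI h
      simp only [mem_union, mem_compl, mem_sdiff] at hvJ hvI ⊢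
      tauto
    rw [h1, h2, zeroOn_union, zeroOn_union, zeroOn_union]
    exact hM.measure_zeroOn_mul (subset_compl_iff_disjoint_right.2 hJ)
  have hIJ := key J hJ
  have hI0 := key ∅ (disjoint_empty_left _)
  rw [compl_empty, union_empty] at hI0
  refine (ENNReal.mul_left_inj he (measure_ne_top μ _)).1 ?_
  calc μ (zeroOn (I ∪ J)ᶜ) * μ (zeroOn univ) * μ (zeroOn E)
      = μ (zeroOn (I ∪ J)ᶜ) * (μ (zeroOn I ∩ zeroOn E) * μ (zeroOn Iᶜ)) := by
        rw [mul_assoc, hI0]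
    _ = μ (zeroOn Iᶜ) * (μ (zeroOn I ∩ zeroOn E) * μ (zeroOn (I ∪ J)ᶜ)) := by ring
    _ = μ (zeroOn Iᶜ) * μ (zeroOn Jᶜ) * μ (zeroOn E) := by rw [← hIJ, mul_assoc]

theorem logVoid_union [IsFiniteMeasure μ] (hM : IsMarkovField μ extB)
    (h0 : μ (zeroOn univ) ≠ 0) {I J : Finset V} (hI : Disjoint I (extB I))
    (hJ : Disjoint J (I ∪ extB I)) :
    logVoid μ (I ∪ J) = logVoid μ I + logVoid μ J - logVoid μ ∅ := by
  have hne : ∀ S, (μ (zeroOn S)).toReal ≠ 0 := fun S =>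
    ENNReal.toReal_ne_zero.2 ⟨measure_zeroOn_ne_zero h0 S, measure_ne_top μ _⟩
  have h := congrArg (Real.log ∘ ENNReal.toReal)
    (hM.measure_zeroOn_compl_union_mul hI hJ (measure_zeroOn_ne_zero h0 _))
  simp only [Function.comp_apply, ENNReal.toReal_mul, Real.log_mul (hne _) (hne _)] at h
  rw [logVoid, logVoid, logVoid, logVoid, compl_empty]
  linarith

end IsMarkovField

end Field

open scoped Classical

theorem stmt3_general {V : Type*} [Fintype V] [DecidableEq V]
    (G : SimpleGraph V)
    (μ : Measure (V → Bool)) [IsProbabilityMeasure μ]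
    -- exterior vertex boundary
    (extB : Finset V → Finset V)
    (hextB : ∀ A : Finset V,
      extB A = Finset.univ.filter (fun v => v ∉ A ∧ ∃ u ∈ A, G.Adj u v))
    -- the Markov property: given the configuration on ∂A, the configuration on A is
    -- conditionally independent of the configuration on V ∖ (A ∪ ∂A)
    (hMarkov : ∀ (A : Finset V) (f : V → Bool),
      μ ({g | ∀ v ∈ A, g v = f v} ∩ {g | ∀ v ∈ extB A, g v = f v}
          ∩ {g | ∀ v ∈ (A ∪ extB A)ᶜ, g v = f v})
        * μ {g | ∀ v ∈ extB A, g v = f v}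
      = μ ({g | ∀ v ∈ A, g v = f v} ∩ {g | ∀ v ∈ extB A, g v = f v})
        * μ ({g | ∀ v ∈ extB A, g v = f v} ∩ {g | ∀ v ∈ (A ∪ extB A)ᶜ, g v = f v}))
    -- positivity of the conditional void probabilities
    (hpos : ∀ A : Finset V,
      0 < (ProbabilityTheory.cond μ {g | ∀ v ∈ extB A, g v = false})
            {g | ∀ v ∈ A, g v = false})
    -- the unique signed measure corresponding to X, via Möbius inversion
    (ν : Finset V → ℝ)
    (hν : ∀ K : Finset V,
      ν K = ∑ I ∈ K.powerset, (-1 : ℝ) ^ (K.card - I.card)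
        * Real.log ((μ {g | ∀ v ∈ (Iᶜ : Finset V), g v = false}).toReal)) :
    ∀ D : Finset V, D.Nonempty → ¬ (G.induce (D : Set V)).Connected → ν D = 0 := by
  intro D hD hconn
  obtain rfl : extB = exteriorBoundary G := funext hextB
  obtain ⟨A, hAD, ⟨a, ha⟩, ⟨b, hb⟩, hadj⟩ := exists_split_of_not_connected_induce G hD hconn
  have h0 : μ (zeroOn univ) ≠ 0 := by
    simpa [zeroOn, exteriorBoundary_univ] using (hpos univ).ne'
  have hsplit : ∀ K ⊆ D,
      logVoid μ K = logVoid μ (K ∩ A) + logVoid μ (K \ A) - logVoid μ ∅ := by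
    intro K hK
    conv_lhs => rw [← sdiff_union_inter K A, union_comm]
    refine IsMarkovField.logVoid_union hMarkov h0 (disjoint_exteriorBoundary G _)
      (disjoint_union_exteriorBoundary G (disjoint_sdiff_inter K A).symm fun u hu w hw => ?_)
    exact hadj u (mem_inter.1 hu).2 w (sdiff_subset_sdiff hK subset_rfl hw)
  rw [hν D]
  change ∑ K ∈ D.powerset, (-1 : ℝ) ^ (#D - #K) * logVoid μ K = 0
  rw [sum_congr rfl fun K hK => by rw [hsplit K (mem_powerset.1 hK)]]
  simp only [mul_sub, mul_add, sum_add_distrib, sum_sub_distrib]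
  rw [sum_powerset_neg_one_pow_mul_eq_zero (mem_sdiff.1 hb).1
      fun K _ => by rw [insert_inter_of_notMem (mem_sdiff.1 hb).2],
    sum_powerset_neg_one_pow_mul_eq_zero (hAD ha) fun K _ => by rw [insert_sdiff_of_mem _ ha],
    sum_powerset_neg_one_pow_mul_eq_zero (mem_sdiff.1 hb).1 fun K _ => rfl]
  norm_num

/-- for a `{0,1}`-valued Markov field on a finite connected graph with
positive conditional void probabilities, the unique signed measure `ν`
(given by Möbius inversion) vanishes on every (nonempty) subset inducing a
disconnected subgraph. -/
theorem stmt3 {V : Type*} [Fintype V] [DecidableEq V]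
    (G : SimpleGraph V) (hG : G.Connected)
    (μ : Measure (V → Bool)) [IsProbabilityMeasure μ]
    -- exterior vertex boundary
    (extB : Finset V → Finset V)
    (hextB : ∀ A : Finset V,
      extB A = Finset.univ.filter (fun v => v ∉ A ∧ ∃ u ∈ A, G.Adj u v))
    -- the Markov property: given the configuration on ∂A, the configuration on A is
    -- conditionally independent of the configuration on V ∖ (A ∪ ∂A)
    (hMarkov : ∀ (A : Finset V) (f : V → Bool),
      μ ({g | ∀ v ∈ A, g v = f v} ∩ {g | ∀ v ∈ extB A, g v = f v}
          ∩ {g | ∀ v ∈ (A ∪ extB A)ᶜ, g v = f v})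
        * μ {g | ∀ v ∈ extB A, g v = f v}
      = μ ({g | ∀ v ∈ A, g v = f v} ∩ {g | ∀ v ∈ extB A, g v = f v})
        * μ ({g | ∀ v ∈ extB A, g v = f v} ∩ {g | ∀ v ∈ (A ∪ extB A)ᶜ, g v = f v}))
    -- positivity of the conditional void probabilities
    (hpos : ∀ A : Finset V,
      0 < (ProbabilityTheory.cond μ {g | ∀ v ∈ extB A, g v = false})
            {g | ∀ v ∈ A, g v = false})
    -- the unique signed measure corresponding to X, via Möbius inversion
    (ν : Finset V → ℝ)
    (hν : ∀ K : Finset V,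
      ν K = ∑ I ∈ K.powerset, (-1 : ℝ) ^ (K.card - I.card)
        * Real.log ((μ {g | ∀ v ∈ (Iᶜ : Finset V), g v = false}).toReal)) :
    ∀ D : Finset V, D.Nonempty → ¬ (G.induce (D : Set V)).Connected → ν D = 0 :=
  stmt3_general G μ extB hextB hMarkov hpos ν hν
end

section
/- Let T be a finite tree and X a tree-indexed Markov chain on T with parameters (r, (p_e)) where r ∈ (0,1] and p_e ∈ [0,1]. For a singleton set S = {o} where o is the root, the unique signed measure ν corresponding to X satisfies ν({o}) = log( (r ∏_{e ∈ E_o}(1-p_e+p_e r) + (1-r)∏_{e ∈ E_o}(p_e r)) / (r ∏_{e ∈ E_o}(1-p_e+p_e r)) ), where E_o is the set of edges incident to o; in particular ν({o}) ≥ 0. -/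
/-!
Applying the defining identity of `ν` to `I = V` and to `I = V \ {o}`: the sets meeting `V`
are those meeting `V \ {o}` together with `{o}`, so
`ν {o} = log P(X ≡ 0 off o) - log P(X ≡ 0)`. The event `X ≡ 0 off o` consists of the all-zero
configuration and the one that is `1` exactly at the root. Both weights carry the same factor
`1 - p_v + p_v r` for every vertex `v` that is not a child of `o`, and it cancels in the ratio.
-/

open Finset
open scoped Classical

section

variable {V : Type*} [Fintype V] [DecidableEq V]

theorem powerset_filter_inter_univ_nonempty (o : V) :
    univ.powerset.filter (fun K : Finset V => (K ∩ univ).Nonempty)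
      = insert {o} (univ.powerset.filter (fun K => (K ∩ univ.erase o).Nonempty)) := by
  ext K
  simp only [mem_insert, mem_filter, mem_powerset, subset_univ, true_and, inter_univ,
    inter_erase, Finset.Nonempty, mem_erase, eq_singleton_iff_unique_mem]
  constructor
  · rintro ⟨v, hv⟩
    by_cases h : ∀ u ∈ K, u = o
    · exact Or.inl ⟨h v hv ▸ hv, h⟩
    · obtain ⟨u, hu, huo⟩ := by simpa only [not_forall, exists_prop] using h
      exact Or.inr ⟨u, huo, hu⟩
  · rintro (⟨ho, -⟩ | ⟨u, -, hu⟩)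
    exacts [⟨o, ho⟩, ⟨u, hu⟩]

theorem apply_singleton_eq_log_sub_log {P0 ν : Finset V → ℝ}
    (hν : ∀ I : Finset V,
      ∑ K ∈ univ.powerset.filter (fun K => (K ∩ I).Nonempty), ν K = - Real.log (P0 I))
    (o : V) :
    ν {o} = Real.log (P0 (univ.erase o)) - Real.log (P0 univ) := by
  have h := hν univ
  rw [powerset_filter_inter_univ_nonempty o, sum_insert (by simp), hν] at h
  linarith

theorem sum_boole_forall_false_univ (w : (V → Bool) → ℝ) :
    ∑ f : V → Bool, (if ∀ v ∈ univ, f v = false then (1 : ℝ) else 0) * w f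
      = w (fun _ => false) := by
  rw [Fintype.sum_eq_single (fun _ => false)]
  · simp
  · intro f hf
    rw [if_neg fun h => hf (funext fun v => h v (mem_univ v)), zero_mul]

theorem sum_boole_forall_false_erase (w : (V → Bool) → ℝ) (o : V) :
    ∑ f : V → Bool, (if ∀ v ∈ univ.erase o, f v = false then (1 : ℝ) else 0) * w f
      = w (fun _ => false) + w (fun v => decide (v = o)) := by
  rw [Fintype.sum_eq_add (fun _ => false) (fun v => decide (v = o))]
  · simp
  · exact fun h => by simpa using congrFun h o
  · rintro f ⟨hf0, hf1⟩
    refine if_neg (fun h => ?_) ▸ zero_mul _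
    have hoff : ∀ v, v ≠ o → f v = false := fun v hv => h v (mem_erase.2 ⟨hv, mem_univ v⟩)
    cases hfo : f o
    · exact hf0 (funext fun v => by by_cases hv : v = o <;> simp_all)
    · exact hf1 (funext fun v => by by_cases hv : v = o <;> simp_all)

def markovWeight (o : V) (par : V → V) (r : ℝ) (pe : V → ℝ) (f : V → Bool) : ℝ :=
  (if f o = false then r else 1 - r)
    * ∏ v ∈ univ.erase o,
        ((if f v = f (par v) then 1 - pe v else 0)
          + pe v * (if f v = false then r else 1 - r))

theorem markovWeight_const_false (o : V) (par : V → V) (r : ℝ) (pe : V → ℝ) :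
    markovWeight o par r pe (fun _ => false) = r * ∏ v ∈ univ.erase o, (1 - pe v + pe v * r) := by
  simp [markovWeight]

theorem markovWeight_decide_eq_root (o : V) (par : V → V) (r : ℝ) (pe : V → ℝ) :
    markovWeight o par r pe (fun v => decide (v = o))
      = (1 - r) * ∏ v ∈ univ.erase o,
          (if par v = o then pe v * r else 1 - pe v + pe v * r) := by
  unfold markovWeight
  congr 1
  · simp
  · refine prod_congr rfl fun v hv => ?_
    have hvo : v ≠ o := ne_of_mem_erase hv
    by_cases h : par v = o <;> simp [hvo, h, mul_comm]

theorem prod_erase_ite_parent_eq {M : Type*} [CommMonoid M] (o : V) (par : V → V)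
    (a b : V → M) :
    ∏ v ∈ univ.erase o, (if par v = o then a v else b v)
      = (∏ v ∈ univ.filter (fun v => v ≠ o ∧ par v = o), a v)
        * ∏ v ∈ univ.filter (fun v => v ≠ o ∧ par v ≠ o), b v := by
  rw [prod_ite]
  congr 2 <;> ext v <;> simp [and_comm]

end

theorem stmt11_general {V : Type*} [Fintype V] [DecidableEq V]
    (o : V) (par : V → V)
    (r : ℝ) (hr : r ∈ Set.Ioc (0 : ℝ) 1)
    (pe : V → ℝ) (hpe : ∀ v, pe v ∈ Set.Icc (0 : ℝ) 1)
    -- the law of the tree-indexed Markov chain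
    (w : (V → Bool) → ℝ)
    (hw : ∀ f : V → Bool,
      w f = (if f o = false then r else 1 - r)
        * ∏ v ∈ Finset.univ.erase o,
            ((if f v = f (par v) then 1 - pe v else 0)
              + pe v * (if f v = false then r else 1 - r)))
    (P0 : Finset V → ℝ)
    (hP0 : ∀ I : Finset V,
      P0 I = ∑ f : V → Bool, (if ∀ v ∈ I, f v = false then (1 : ℝ) else 0) * w f)
    -- ν is the unique signed measure corresponding to the chain
    (ν : Finset V → ℝ)
    (hν : ∀ I : Finset V,
      ∑ K ∈ Finset.univ.powerset.filter (fun K => (K ∩ I).Nonempty), ν K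
        = - Real.log (P0 I)) :
    ν {o}
      = Real.log
          ((r * ∏ v ∈ Finset.univ.filter (fun v => v ≠ o ∧ par v = o),
              (1 - pe v + pe v * r)
            + (1 - r) * ∏ v ∈ Finset.univ.filter (fun v => v ≠ o ∧ par v = o),
                (pe v * r))
          / (r * ∏ v ∈ Finset.univ.filter (fun v => v ≠ o ∧ par v = o),
              (1 - pe v + pe v * r))) ∧
    0 ≤ ν {o} := by
  obtain ⟨hr0, hr1⟩ := hr
  obtain rfl : w = markovWeight o par r pe := funext hw
  have hq : ∀ v, 0 < 1 - pe v + pe v * r := fun v => by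
    linarith [mul_le_mul_of_nonneg_right (hpe v).2 (sub_nonneg.2 hr1)]
  have prod_split (g : V → ℝ) := prod_erase_ite_parent_eq o par g g
  simp only [ite_self] at prod_split
  set A := ∏ v ∈ univ.filter (fun v => v ≠ o ∧ par v = o), (1 - pe v + pe v * r)
  set B := ∏ v ∈ univ.filter (fun v => v ≠ o ∧ par v = o), (pe v * r)
  set D := ∏ v ∈ univ.filter (fun v => v ≠ o ∧ par v ≠ o), (1 - pe v + pe v * r)
  have hA : 0 < A := prod_pos fun v _ => hq v
  have hB : 0 ≤ B := prod_nonneg fun v _ => mul_nonneg (hpe v).1 hr0.le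
  have hD : 0 < D := prod_pos fun v _ => hq v
  have hPuniv : P0 univ = r * A * D := by
    rw [hP0, sum_boole_forall_false_univ, markovWeight_const_false, prod_split, mul_assoc]
  have hPerase : P0 (univ.erase o) = (r * A + (1 - r) * B) * D := by
    rw [hP0, sum_boole_forall_false_erase, markovWeight_const_false,
      markovWeight_decide_eq_root, prod_split, prod_erase_ite_parent_eq]
    ring
  have hνo : ν {o} = Real.log ((r * A + (1 - r) * B) / (r * A)) := by
    rw [apply_singleton_eq_log_sub_log hν, hPerase, hPuniv, ← Real.log_div (by positivity)
      (by positivity), mul_div_mul_right _ _ hD.ne']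
  refine ⟨hνo, hνo ▸ Real.log_nonneg ((one_le_div (by positivity)).2 ?_)⟩
  exact le_add_of_nonneg_right (mul_nonneg (sub_nonneg.2 hr1) hB)

/-- for a tree-indexed Markov chain on a finite tree with vertex
parameter `r ∈ (0,1]` and edge parameters `p_e ∈ [0,1]`, the unique signed measure
satisfies
`ν({o}) = log((r ∏_{e∈E_o}(1-p_e+p_e r) + (1-r)∏_{e∈E_o}(p_e r)) / (r ∏_{e∈E_o}(1-p_e+p_e r)))`,
where `E_o` is the set of edges incident to the root `o`; in particular `ν({o}) ≥ 0`.
The finite tree is encoded by its vertex set `V` and parent map `par` rooted at `o`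
(edges are the pairs `(par v, v)` for `v ≠ o`, and `pe v` is the parameter of the
edge above `v`). -/
theorem stmt11 {V : Type*} [Fintype V] [DecidableEq V]
    (o : V) (par : V → V) (hpar : par o = o)
    (htree : ∀ v : V, ∃ n : ℕ, par^[n] v = o)
    (r : ℝ) (hr : r ∈ Set.Ioc (0 : ℝ) 1)
    (pe : V → ℝ) (hpe : ∀ v, pe v ∈ Set.Icc (0 : ℝ) 1)
    -- the law of the tree-indexed Markov chain
    (w : (V → Bool) → ℝ)
    (hw : ∀ f : V → Bool,
      w f = (if f o = false then r else 1 - r)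
        * ∏ v ∈ Finset.univ.erase o,
            ((if f v = f (par v) then 1 - pe v else 0)
              + pe v * (if f v = false then r else 1 - r)))
    (P0 : Finset V → ℝ)
    (hP0 : ∀ I : Finset V,
      P0 I = ∑ f : V → Bool, (if ∀ v ∈ I, f v = false then (1 : ℝ) else 0) * w f)
    -- ν is the unique signed measure corresponding to the chain
    (ν : Finset V → ℝ) (hν0 : ν ∅ = 0)
    (hν : ∀ I : Finset V,
      ∑ K ∈ Finset.univ.powerset.filter (fun K => (K ∩ I).Nonempty), ν K
        = - Real.log (P0 I)) :
    ν {o}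
      = Real.log
          ((r * ∏ v ∈ Finset.univ.filter (fun v => v ≠ o ∧ par v = o),
              (1 - pe v + pe v * r)
            + (1 - r) * ∏ v ∈ Finset.univ.filter (fun v => v ≠ o ∧ par v = o),
                (pe v * r))
          / (r * ∏ v ∈ Finset.univ.filter (fun v => v ≠ o ∧ par v = o),
              (1 - pe v + pe v * r))) ∧
    0 ≤ ν {o} :=
  stmt11_general o par r hr pe hpe w hw P0 hP0 ν hν
end

section
/- Let S be a finite set and X a {0,1}-valued process on S with P(X(I) ≡ 0) > 0 for all I ⊆ S. If the unique signed measure ν corresponding to X (given by Möbius inversion) is nonnegative, then X is equal in distribution to X^ν, the indicator of the union of a Poisson process of subsets with intensity ν; in particular X is Poisson representable. -/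
/-!
Möbius inversion turns the definition of `ν` into `∑_{K ⊆ L} ν K = log P(X(Lᶜ) ≡ 0)`, so the total
`ν`-mass of the sets meeting `I` is `-log P(X(I) ≡ 0)`. Take independent Poisson counts `N_K` with
means `ν K ≥ 0`, one for each nonempty `K`, and let `Z` contain `K` with multiplicity `N_K`. The
union of `Z` avoids `I` exactly when `N_K = 0` for every `K` meeting `I`, which has probability
`exp (-∑_{K ∩ I ≠ ∅} ν K) = P(X(I) ≡ 0)`; Poisson counts and independence over disjoint families
come from sums of independent Poisson variables being Poisson.
-/

open ProbabilityTheory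
open scoped NNReal

namespace Finset

variable {α R : Type*} [DecidableEq α] [Ring R]

theorem sum_Icc_neg_one_pow_card_sub {I L : Finset α} (hIL : I ⊆ L) :
    ∑ K ∈ Icc I L, (-1 : R) ^ (#K - #I) = if I = L then 1 else 0 := by
  have hinj : Set.InjOn (I ∪ ·) ((L \ I).powerset : Set (Finset α)) := fun T hT T' hT' h => by
    simp only [coe_powerset, Set.mem_preimage, Set.mem_powerset_iff, coe_subset] at hT hT'
    rw [← union_sdiff_cancel_left (disjoint_of_subset_right hT disjoint_sdiff),
      ← union_sdiff_cancel_left (disjoint_of_subset_right hT' disjoint_sdiff)]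
    exact congrArg (· \ I) h
  rw [Icc_eq_image_powerset hIL, sum_image hinj]
  calc ∑ T ∈ (L \ I).powerset, (-1 : R) ^ (#(I ∪ T) - #I)
      = ∑ T ∈ (L \ I).powerset, (((-1 : ℤ) ^ #T : ℤ) : R) := by
        refine sum_congr rfl fun T hT => ?_
        rw [card_union_of_disjoint (disjoint_of_subset_right (mem_powerset.mp hT) disjoint_sdiff),
          Nat.add_sub_cancel_left]
        push_cast; rfl
    _ = if I = L then 1 else 0 := by
        rw [← Int.cast_sum, sum_powerset_neg_one_pow_card]
        by_cases h : I = L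
        · simp [h]
        · have hne : L \ I ≠ ∅ := fun he => h (hIL.antisymm (sdiff_eq_empty_iff_subset.mp he))
          simp [h, hne]

theorem sum_powerset_eq_of_moebius (g ν : Finset α → R)
    (hν : ∀ K, ν K = ∑ I ∈ K.powerset, (-1 : R) ^ (#K - #I) * g I) (L : Finset α) :
    ∑ K ∈ L.powerset, ν K = g L :=
  calc ∑ K ∈ L.powerset, ν K
      = ∑ K ∈ L.powerset, ∑ I ∈ K.powerset, (-1 : R) ^ (#K - #I) * g I :=
        sum_congr rfl fun K _ => hν K
    _ = ∑ I ∈ L.powerset, (∑ K ∈ Icc I L, (-1 : R) ^ (#K - #I)) * g I := by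
        simp_rw [sum_mul]
        exact sum_comm' fun K I => by
          simp only [mem_powerset, mem_Icc]
          exact ⟨fun ⟨hKL, hIK⟩ => ⟨⟨hIK, hKL⟩, hIK.trans hKL⟩, fun ⟨⟨hIK, hKL⟩, _⟩ => ⟨hKL, hIK⟩⟩
    _ = g L := by
        rw [sum_congr rfl fun I hI => by rw [sum_Icc_neg_one_pow_card_sub (mem_powerset.mp hI)]]
        simp

theorem sum_filter_not_disjoint_eq_of_moebius [Fintype α] (g ν : Finset α → R)
    (hν : ∀ K, ν K = ∑ I ∈ K.powerset, (-1 : R) ^ (#K - #I) * g I) (I : Finset α) :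
    ∑ K with ¬ Disjoint K I, ν K = g univ - g Iᶜ := by
  rw [eq_sub_iff_add_eq, ← sum_powerset_eq_of_moebius g ν hν, ← sum_powerset_eq_of_moebius g ν hν,
    powerset_univ, ← sum_filter_not_add_sum_filter univ (Disjoint · I)]
  congr 2
  ext K; simp [subset_compl_iff_disjoint_right]

end Finset

theorem Finset.sum_filter_equiv_subtype {ι α M : Type*} [Fintype ι] [Fintype α] [AddCommMonoid M]
    {q : α → Prop} [DecidablePred q] (e : ι ≃ Subtype q) (p : α → Prop) [DecidablePred p]
    (f : α → M) :
    ∑ j with p (e j), f (e j) = ∑ a with p a ∧ q a, f a := by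
  rw [sum_filter, e.sum_comp (fun x : Subtype q => if p x then f x else 0),
    ← sum_subtype (univ.filter q) (by simp) (fun a => if p a then f a else 0), sum_filter,
    sum_filter]
  simp only [ite_and, and_comm]

namespace Multiset

variable {ι α : Type*} [Fintype ι]

def ofCounts (b : ι → α) (ω : ι → ℕ) : Multiset α :=
  ∑ i, replicate (ω i) (b i)

lemma mem_ofCounts {b : ι → α} {ω : ι → ℕ} {a : α} :
    a ∈ ofCounts b ω ↔ ∃ i, ω i ≠ 0 ∧ b i = a := by
  simp [ofCounts, mem_sum, mem_replicate, eq_comm]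

lemma countP_ofCounts (b : ι → α) (p : α → Prop) [DecidablePred p] (ω : ι → ℕ) :
    (ofCounts b ω).countP p = ∑ i with p (b i), ω i := by
  rw [ofCounts, ← coe_countPAddMonoidHom, map_sum, Finset.sum_filter]
  simp [← coe_replicate, List.countP_replicate]

end Multiset

namespace ProbabilityTheory

open MeasureTheory Finset

lemma poissonMeasure_zero : poissonMeasure 0 = Measure.dirac 0 := by
  refine Measure.ext_of_singleton fun n => ?_
  rw [poissonMeasure_singleton, Measure.dirac_apply]
  rcases n with _ | n <;> simp

variable {ι : Type*} [Fintype ι]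

noncomputable def poissonPi (r : ι → ℝ≥0) : Measure (ι → ℕ) :=
  Measure.pi fun i => poissonMeasure (r i)

variable (r : ι → ℝ≥0)

instance : IsProbabilityMeasure (poissonPi r) := by
  unfold poissonPi; infer_instance

lemma iIndepFun_eval_poissonPi : iIndepFun (fun i (ω : ι → ℕ) => ω i) (poissonPi r) :=
  iIndepFun_pi (X := fun _ => id) fun _ => aemeasurable_id

lemma hasLaw_eval_poissonPi (i : ι) :
    HasLaw (fun ω : ι → ℕ => ω i) (poissonMeasure (r i)) (poissonPi r) :=
  (measurePreserving_eval (fun i => poissonMeasure (r i)) i).hasLaw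

lemma hasLaw_sum_poissonPi (A : Finset ι) :
    HasLaw (fun ω : ι → ℕ => ∑ i ∈ A, ω i) (poissonMeasure (∑ i ∈ A, r i)) (poissonPi r) := by
  induction A using Finset.cons_induction with
  | empty =>
    simp only [sum_empty, poissonMeasure_zero]
    exact hasLaw_dirac_of_ae_eq (Filter.Eventually.of_forall fun _ => rfl)
  | cons a A ha ih =>
    have hindep := (iIndepFun_eval_poissonPi r).indepFun_finsetSum_of_notMem
      (fun i => measurable_pi_apply i) ha
    simp only [sum_cons]
    rw [add_comm (r a)]
    convert! hindep.hasLaw_add_poissonMeasure ?_ (hasLaw_eval_poissonPi r a) using 1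
    · ext ω; simp [add_comm]
    · convert! ih using 1; ext ω; simp

lemma indepFun_sum_poissonPi {A B : Finset ι} (hAB : Disjoint A B) :
    IndepFun (fun ω : ι → ℕ => ∑ i ∈ A, ω i) (fun ω => ∑ i ∈ B, ω i) (poissonPi r) := by
  have := ((iIndepFun_eval_poissonPi r).indepFun_finset A B hAB
    fun i => measurable_pi_apply i).comp
      (φ := fun v : A → ℕ => ∑ i, v i) (ψ := fun v : B → ℕ => ∑ i, v i) (by fun_prop) (by fun_prop)
  convert! this using 1 <;> ext ω <;> exact (sum_attach _ _).symm

variable {α : Type*} (b : ι → α)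

lemma poissonPi_countP_ofCounts_eq (p : α → Prop) [DecidablePred p] (n : ℕ) :
    poissonPi r {ω | (Multiset.ofCounts b ω).countP p = n}
      = poissonMeasure (∑ i with p (b i), r i) {n} := by
  simp_rw [Multiset.countP_ofCounts]
  exact (hasLaw_sum_poissonPi r _).measure_eq (p := (· = n)) (measurableSet_singleton n)

lemma poissonPi_countP_ofCounts_inter {p q : α → Prop} [DecidablePred p] [DecidablePred q]
    (hpq : ∀ a, p a → ¬ q a) (n n' : ℕ) :
    poissonPi r ({ω | (Multiset.ofCounts b ω).countP p = n}
        ∩ {ω | (Multiset.ofCounts b ω).countP q = n'})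
      = poissonPi r {ω | (Multiset.ofCounts b ω).countP p = n}
        * poissonPi r {ω | (Multiset.ofCounts b ω).countP q = n'} := by
  simp_rw [Multiset.countP_ofCounts]
  exact IndepFun.measure_inter_preimage_eq_mul
    (indepFun_sum_poissonPi r (disjoint_filter.mpr fun i _ => hpq (b i))) _ _
    (measurableSet_singleton n) (measurableSet_singleton n')

lemma poissonPi_forall_mem_ofCounts_disjoint {β : Type*} [DecidableEq β] (b : ι → Finset β)
    (I : Finset β) :
    poissonPi r {ω | ∀ B ∈ Multiset.ofCounts b ω, Disjoint B I}
      = ENNReal.ofReal (Real.exp (-(∑ i with ¬ Disjoint (b i) I, r i : ℝ≥0))) := by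
  have hset : {ω | ∀ B ∈ Multiset.ofCounts b ω, Disjoint B I}
      = {ω | ∑ i with ¬ Disjoint (b i) I, ω i = 0} := by
    ext ω
    simp only [Set.mem_ofPred_eq, Multiset.mem_ofCounts, Finset.sum_eq_zero_iff, mem_filter,
      mem_univ, true_and]
    exact ⟨fun h i hi => by_contra fun hω => hi (h _ ⟨i, hω, rfl⟩),
      fun h _ ⟨i, hω, hi⟩ => hi ▸ by_contra fun hd => hω (h i hd)⟩
  rw [hset, (hasLaw_sum_poissonPi r _).measure_eq (p := (· = 0)) (measurableSet_singleton 0),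
    Set.ofPred_eq_eq_singleton, poissonMeasure_singleton]
  simp

end ProbabilityTheory

open MeasureTheory Finset
open scoped Classical

/-- if the signed measure `ν` obtained by Möbius inversion from the void
probabilities of a `{0,1}`-valued process `X` on a finite set `S` is nonnegative,
then `X` is equal in distribution to `X^ν`: there is a Poisson process `Z` of
nonempty subsets of `S` with intensity `ν` (Poisson counts and independence over
disjoint families) such that the indicator of the union of `Z` has exactly the void
probabilities of `X`. In particular, `X` is Poisson representable. -/
theorem stmt16 {S : Type*} [Fintype S] [DecidableEq S]
    {Ω0 : Type*} [MeasurableSpace Ω0] (μ0 : Measure Ω0) [IsProbabilityMeasure μ0]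
    (X : Ω0 → S → Bool) (P0 : Finset S → ℝ)
    (hP0 : ∀ I : Finset S, P0 I = (μ0 {ω | ∀ i ∈ I, X ω i = false}).toReal)
    (hpos : ∀ I : Finset S, 0 < P0 I)
    (ν : Finset S → ℝ)
    (hν : ∀ K : Finset S,
      ν K = ∑ I ∈ K.powerset, (-1 : ℝ) ^ (K.card - I.card) * Real.log (P0 Iᶜ))
    (hnonneg : ∀ K : Finset S, K.Nonempty → 0 ≤ ν K) :
    ∃ (Ω : Type) (_ : MeasurableSpace Ω) (μ : Measure Ω) (_ : IsProbabilityMeasure μ)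
      (Z : Ω → Multiset (Finset S)),
      -- Z consists of nonempty subsets of S
      (∀ ω, ∀ B ∈ Z ω, B.Nonempty) ∧
      -- Poisson counts with intensity ν
      (∀ (𝒜 : Set (Finset S)) (n : ℕ),
        μ {ω | (Z ω).countP (· ∈ 𝒜) = n}
          = ENNReal.ofReal
              (Real.exp (-(∑ K ∈ Finset.univ.filter (fun K => K ∈ 𝒜 ∧ K.Nonempty), ν K))
                * (∑ K ∈ Finset.univ.filter (fun K => K ∈ 𝒜 ∧ K.Nonempty), ν K) ^ n
                / n.factorial)) ∧
      -- independence of the counts over disjoint families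
      (∀ (𝒜 ℬ : Set (Finset S)), Disjoint 𝒜 ℬ → ∀ n n' : ℕ,
        μ ({ω | (Z ω).countP (· ∈ 𝒜) = n} ∩ {ω | (Z ω).countP (· ∈ ℬ) = n'})
          = μ {ω | (Z ω).countP (· ∈ 𝒜) = n} * μ {ω | (Z ω).countP (· ∈ ℬ) = n'}) ∧
      -- X^ν, the indicator of the union of Z, has the same distribution as X
      (∀ I : Finset S,
        μ {ω | ∀ i ∈ I, (decide (∃ B ∈ Z ω, i ∈ B)) = false}
          = ENNReal.ofReal (P0 I)) := by
  -- The counts are indexed by `Fin _` rather than by the subtype so that `Ω` lives in `Type`.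
  let e := (Fintype.equivFin {K : Finset S // K.Nonempty}).symm
  let r : Fin _ → ℝ≥0 := fun j => (ν (e j)).toNNReal
  let Z := Multiset.ofCounts fun j => (e j : Finset S)
  have hrate (p : Finset S → Prop) [DecidablePred p] :
      ((∑ j with p (e j), r j : ℝ≥0) : ℝ) = ∑ K with p K ∧ K.Nonempty, ν K := by
    rw [NNReal.coe_sum, ← sum_filter_equiv_subtype e p ν]
    exact sum_congr rfl fun j _ => Real.coe_toNNReal _ (hnonneg _ (e j).2)
  have hmeet (I : Finset S) : ∑ K with ¬ Disjoint K I ∧ K.Nonempty, ν K = -Real.log (P0 I) := by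
    have hP0_empty : P0 ∅ = 1 := by simp [hP0]
    rw [filter_congr fun K _ => and_iff_left_of_imp fun h =>
        (not_disjoint_iff_nonempty_inter.mp h).mono inter_subset_left,
      sum_filter_not_disjoint_eq_of_moebius (fun L => Real.log (P0 Lᶜ)) ν hν]
    simp [hP0_empty]
  refine ⟨_, _, poissonPi r, inferInstance, Z, fun ω B hB => ?_, fun 𝒜 n => ?_,
    fun 𝒜 ℬ h n n' =>
      poissonPi_countP_ofCounts_inter r _ (fun _ ha => Set.disjoint_left.mp h ha) n n',
    fun I => ?_⟩
  · obtain ⟨j, -, rfl⟩ := Multiset.mem_ofCounts.mp hB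
    exact (e j).2
  · rw [poissonPi_countP_ofCounts_eq, poissonMeasure_singleton, hrate (· ∈ 𝒜)]
  · have hset : {ω | ∀ i ∈ I, decide (∃ B ∈ Z ω, i ∈ B) = false}
        = {ω | ∀ B ∈ Z ω, Disjoint B I} := by
      ext ω
      simp only [Set.mem_ofPred_eq, decide_eq_false_iff_not, not_exists, not_and, disjoint_left]
      exact ⟨fun h B hB i hiB hiI => h i hiI B hB hiB, fun h i hiI B hB hiB => h B hB hiB hiI⟩
    rw [hset, poissonPi_forall_mem_ofCounts_disjoint, hrate (¬ Disjoint · I), hmeet, neg_neg,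
      Real.exp_log (hpos I)]
end

section
/- Let X be the tree-indexed Markov chain with parameters (r,p) on the depth-2 spider T consisting of root o, children v_{j,1} and grandchildren v_{j,2} for j = 1,…,m (m ≥ 3), with per-edge resampling probabilities p_{j,1} on edge (o,v_{j,1}) and p_{j,2} on edge (v_{j,1},v_{j,2}), and all vertex parameters equal to r. Let S = {o, v_{1,1}, …, v_{m,1}} and let ν be the corresponding signed measure. Then the partial derivative of ν(S) with respect to r_o (the root's parameter), evaluated at all vertex parameters equal to 1, equals −∏_{j=1}^m (1−p_{j,1}) p_{j,2}. -/
/-!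
Conditioning on the root value: if `X(o) = 0` the whole spider is `0`; if `X(o) = 1` the arms are
independent, and the vanishing event for `J` has probability `C(J) = ∏ⱼ cⱼ`, with `cⱼ = p_{j,1}`
for `j ∈ J` (the child must refresh) and `cⱼ = p_{j,1} + (1 - p_{j,1}) p_{j,2}` otherwise. Thus
`P_s(J) = s + (1 - s) C(J)`, so `d/ds log P_s(J) = 1 - C(J)` at `s = 1`. The alternating sum over
`J` kills the constant (there is at least one arm) and, by multilinearity, turns `∑ (-1)^|J| C(J)`
into `∏ⱼ ((p_{j,1} + (1 - p_{j,1}) p_{j,2}) - p_{j,1}) = ∏ⱼ (1 - p_{j,1}) p_{j,2}`.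
-/

open Finset
open scoped Classical

theorem sum_powerset_neg_one_pow_mul_prod_ite {ι R : Type*} [Fintype ι] [DecidableEq ι]
    [CommRing R] (a b : ι → R) :
    ∑ J ∈ univ.powerset, (-1) ^ #J * ∏ j, (if j ∈ J then a j else b j) = ∏ j, (b j - a j) := by
  rw [prod_sub]
  refine sum_congr rfl fun J _ => ?_
  rw [prod_ite, filter_mem_eq_inter, univ_inter, ← sdiff_eq_filter, mul_assoc,
    mul_comm (∏ j ∈ J, a j)]

theorem hasDerivAt_log_add_one_sub_mul (c : ℝ) :
    HasDerivAt (fun s => Real.log (s + (1 - s) * c)) (1 - c) 1 := by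
  have hlin : HasDerivAt (fun s : ℝ => s + (1 - s) * c) (1 - c) 1 :=
    ((hasDerivAt_id' 1).add (((hasDerivAt_id' 1).const_sub 1).mul_const c)).congr_deriv (by ring)
  simpa using hlin.log (by norm_num)

/-- Law of `(X(v₁), X(v₂))` on an arm `o → v₁ → v₂` with resampling probabilities `q₁, q₂`, given
`X(o) = x₀`, when `v₁, v₂` have refresh parameter `1`; the value `0` is encoded as `false`. -/
def armWeight (q₁ q₂ : ℝ) (x₀ : Bool) (y : Bool × Bool) : ℝ :=
  ((if y.1 = x₀ then 1 - q₁ else 0) + q₁ * (if y.1 = false then 1 else 0)) *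
    ((if y.2 = y.1 then 1 - q₂ else 0) + q₂ * (if y.2 = false then 1 else 0))

theorem sum_armWeight_false (q₁ q₂ : ℝ) (h : Prop) [Decidable h] :
    ∑ y : Bool × Bool, (if (h → y.1 = false) ∧ (¬h → y.2 = false) then 1 else 0) *
        armWeight q₁ q₂ false y = 1 := by
  by_cases hh : h <;> simp [Fintype.sum_prod_type, armWeight, hh]

theorem sum_armWeight_true (q₁ q₂ : ℝ) (h : Prop) [Decidable h] :
    ∑ y : Bool × Bool, (if (h → y.1 = false) ∧ (¬h → y.2 = false) then 1 else 0) *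
        armWeight q₁ q₂ true y = if h then q₁ else q₁ + (1 - q₁) * q₂ := by
  by_cases hh : h
  · simp [Fintype.sum_prod_type, armWeight, hh]
  · simp [Fintype.sum_prod_type, armWeight, hh]
    ring

theorem spider_voidProb_eq {ι : Type*} [Fintype ι] [DecidableEq ι] (q₁ q₂ : ι → ℝ) (s : ℝ)
    (J : Finset ι) :
    ∑ x : Bool × (ι → Bool × Bool),
        (if (∀ j ∈ J, (x.2 j).1 = false) ∧ (∀ j ∉ J, (x.2 j).2 = false) then 1 else 0) *
          ((if x.1 = false then s else 1 - s) * ∏ j, armWeight (q₁ j) (q₂ j) x.1 (x.2 j)) =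
      s + (1 - s) * ∏ j, (if j ∈ J then q₁ j else q₁ j + (1 - q₁ j) * q₂ j) := by
  have hfactor : ∀ x₀ : Bool,
      ∑ f : ι → Bool × Bool,
          (if (∀ j ∈ J, (f j).1 = false) ∧ (∀ j ∉ J, (f j).2 = false) then 1 else 0) *
            ((if x₀ = false then s else 1 - s) * ∏ j, armWeight (q₁ j) (q₂ j) x₀ (f j)) =
        (if x₀ = false then s else 1 - s) * ∏ j, ∑ y : Bool × Bool,
          (if (j ∈ J → y.1 = false) ∧ (j ∉ J → y.2 = false) then 1 else 0) *
            armWeight (q₁ j) (q₂ j) x₀ y := by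
    intro x₀
    rw [Fintype.prod_sum, mul_sum]
    refine sum_congr rfl fun f _ => ?_
    have hind : (if (∀ j ∈ J, (f j).1 = false) ∧ (∀ j ∉ J, (f j).2 = false) then (1 : ℝ) else 0) =
        ∏ j, if (j ∈ J → (f j).1 = false) ∧ (j ∉ J → (f j).2 = false) then 1 else 0 := by
      rw [Fintype.prod_boole]
      exact if_congr ⟨fun h j => ⟨h.1 j, h.2 j⟩, fun h => ⟨fun j => (h j).1, fun j => (h j).2⟩⟩
        rfl rfl
    rw [hind, prod_mul_distrib]
    ring
  rw [Fintype.sum_prod_type, Fintype.sum_bool, hfactor, hfactor]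
  simp only [sum_armWeight_true, sum_armWeight_false, prod_const_one, Bool.true_eq_false,
    if_true, if_false, mul_one]
  ring

theorem stmt19_general (m : ℕ) (hm : 3 ≤ m)
    (p1 p2 : Fin m → ℝ)
    -- the weight of a configuration, as a function of the root parameter `s`,
    -- with all other vertex refresh parameters equal to 1
    (wgt : ℝ → Bool × (Fin m → Bool × Bool) → ℝ)
    (hwgt : ∀ (s : ℝ) (x : Bool × (Fin m → Bool × Bool)),
      wgt s x = (if x.1 = false then s else 1 - s)
        * ∏ j : Fin m,
            (((if (x.2 j).1 = x.1 then 1 - p1 j else 0)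
                + p1 j * (if (x.2 j).1 = false then (1 : ℝ) else 0))
              * ((if (x.2 j).2 = (x.2 j).1 then 1 - p2 j else 0)
                + p2 j * (if (x.2 j).2 = false then (1 : ℝ) else 0))))
    -- the void probability of the event {X ≡ 0 on J ∪ (B⁺(S) ∖ ∂_S J)}
    (P : ℝ → Finset (Fin m) → ℝ)
    (hP : ∀ (s : ℝ) (J : Finset (Fin m)),
      P s J = ∑ x : Bool × (Fin m → Bool × Bool),
        (if (∀ j ∈ J, (x.2 j).1 = false) ∧ (∀ j ∉ J, (x.2 j).2 = false)
          then (1 : ℝ) else 0) * wgt s x)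
    -- ν(S) as a function of the root parameter
    (F : ℝ → ℝ)
    (hF : ∀ s : ℝ,
      F s = ∑ J ∈ (Finset.univ : Finset (Fin m)).powerset,
        (-1 : ℝ) ^ J.card * Real.log (P s J)) :
    deriv F 1 = -∏ j : Fin m, (1 - p1 j) * p2 j := by
  set C : Finset (Fin m) → ℝ := fun J => ∏ j, (if j ∈ J then p1 j else p1 j + (1 - p1 j) * p2 j)
  have hPC : ∀ s J, P s J = s + (1 - s) * C J := fun s J => by
    simp only [hP, hwgt]
    -- `convert`: over `Fin m` the `∀` in `hP` is decided by `Nat.decidableForallFin`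
    convert spider_voidProb_eq p1 p2 s J
    rfl
  have hF' : F = fun s => ∑ J ∈ univ.powerset, (-1 : ℝ) ^ #J * Real.log (s + (1 - s) * C J) :=
    funext fun s => by simp only [hF, hPC]
  have hderiv := HasDerivAt.fun_sum fun J (_ : J ∈ univ.powerset) =>
    (hasDerivAt_log_add_one_sub_mul (C J)).const_mul ((-1 : ℝ) ^ #J)
  have hne : (univ : Finset (Fin m)).Nonempty := ⟨⟨0, by omega⟩, mem_univ _⟩
  have halt : ∑ J ∈ (univ : Finset (Fin m)).powerset, (-1 : ℝ) ^ #J = 0 := by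
    exact_mod_cast sum_powerset_neg_one_pow_card_of_nonempty hne
  rw [hF', hderiv.deriv]
  simp only [mul_sub, mul_one, sum_sub_distrib, halt, zero_sub, C,
    sum_powerset_neg_one_pow_mul_prod_ite]
  exact congrArg _ (prod_congr rfl fun j _ => by ring)

/-- on the depth-2 spider with `m ≥ 3` arms (root `o`, children
`v_{j,1}`, grandchildren `v_{j,2}`), with edge resampling probabilities
`p₁ j = p_{j,1}` and `p₂ j = p_{j,2}` and all vertex refresh parameters equal to `1`
except the root's, which is `s`, consider
`ν(S)(s) = Σ_{J ⊆ B⁻(S)} (−1)^{|J|} log P_s(X(J ∪ (B⁺(S)∖∂_S J)) ≡ 0)` for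
`S = {o, v_{1,1}, …, v_{m,1}}`. Then `d/ds ν(S)(s) |_{s=1} = −∏_j (1−p_{j,1}) p_{j,2}`.
A configuration is `(x₀, x)` with `x j = (value at v_{j,1}, value at v_{j,2})`. -/
theorem stmt19 (m : ℕ) (hm : 3 ≤ m)
    (p1 p2 : Fin m → ℝ)
    (hp1 : ∀ j, p1 j ∈ Set.Ioo (0 : ℝ) 1) (hp2 : ∀ j, p2 j ∈ Set.Ioo (0 : ℝ) 1)
    -- the weight of a configuration, as a function of the root parameter `s`,
    -- with all other vertex refresh parameters equal to 1
    (wgt : ℝ → Bool × (Fin m → Bool × Bool) → ℝ)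
    (hwgt : ∀ (s : ℝ) (x : Bool × (Fin m → Bool × Bool)),
      wgt s x = (if x.1 = false then s else 1 - s)
        * ∏ j : Fin m,
            (((if (x.2 j).1 = x.1 then 1 - p1 j else 0)
                + p1 j * (if (x.2 j).1 = false then (1 : ℝ) else 0))
              * ((if (x.2 j).2 = (x.2 j).1 then 1 - p2 j else 0)
                + p2 j * (if (x.2 j).2 = false then (1 : ℝ) else 0))))
    -- the void probability of the event {X ≡ 0 on J ∪ (B⁺(S) ∖ ∂_S J)}
    (P : ℝ → Finset (Fin m) → ℝ)
    (hP : ∀ (s : ℝ) (J : Finset (Fin m)),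
      P s J = ∑ x : Bool × (Fin m → Bool × Bool),
        (if (∀ j ∈ J, (x.2 j).1 = false) ∧ (∀ j ∉ J, (x.2 j).2 = false)
          then (1 : ℝ) else 0) * wgt s x)
    -- ν(S) as a function of the root parameter
    (F : ℝ → ℝ)
    (hF : ∀ s : ℝ,
      F s = ∑ J ∈ (Finset.univ : Finset (Fin m)).powerset,
        (-1 : ℝ) ^ J.card * Real.log (P s J)) :
    deriv F 1 = -∏ j : Fin m, (1 - p1 j) * p2 j :=
  stmt19_general m hm p1 p2 wgt hwgt P hP F hF
end
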